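/- Fix a real 𝔞 > 10 and β ≥ 1, and set λ = 𝔞/2 + 5. There exists a constant c > 0 (depending only on 𝔞 and β) such that for every κ ∈ (0,1], every square-summable a : ℤ² → ℂ with a(0) = 0 that is not identically zero, and every integer M ≥ max(2, M^{(β)}(a)), setting T = λ κ^{−1} M^{−2} log M, one has: ∑_{ℓ∈ℤ², 0<|ℓ|≤√2} ∑_{k∈ℤ²∖{0}, k≠ℓ} ( (1 − |k|²/|ℓ−k|²) ⟨k⊥,ℓ⟩ )² · |a(ℓ−k)|² · |k|^{−(𝔞+2)} · ∫₀ᵀ ( ∫ₛᵀ e^{−κ|ℓ|²(T−r)} e^{−κ|ℓ−k|² r} e^{−|k|²(r−s)} dr )² ds ≥ c κ^{−1} M^{−6} ∑_{m∈ℤ²∖{0}} |m|^{−(𝔞+2)} |a(m)|². -/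

import Mathlib

open scoped ENNReal
open MeasureTheory intervalIntegral

/-- Squared Euclidean norm of a lattice point `k ∈ ℤ²`. -/
noncomputable def nsq (k : ℤ × ℤ) : ℝ := (k.1 : ℝ) ^ 2 + (k.2 : ℝ) ^ 2

/-- Standard inner product on `ℝ²` of two lattice points. -/
noncomputable def dotp (k l : ℤ × ℤ) : ℝ := (k.1 : ℝ) * (l.1 : ℝ) + (k.2 : ℝ) * (l.2 : ℝ)

/-- The rotation `k⊥ = (k₂, −k₁)`. -/
def perp (k : ℤ × ℤ) : ℤ × ℤ := (k.2, -k.1)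

/-- The spectral `β`-quantile `M^{(β)}(a)`: the least `N ∈ ℕ`, `N ≥ 1`, such that
`∑_{|k|>N} |a k|² ≤ β² ∑_{0<|k|≤N} |a k|²`. -/
noncomputable def specQuantile (β : ℝ) (a : ℤ × ℤ → ℂ) : ℕ :=
  sInf {N : ℕ | 1 ≤ N ∧
    (∑' k : ℤ × ℤ, if (N : ℝ) ^ 2 < nsq k then ‖a k‖ ^ 2 else 0) ≤
      β ^ 2 * ∑' k : ℤ × ℤ, if k ≠ 0 ∧ nsq k ≤ (N : ℝ) ^ 2 then ‖a k‖ ^ 2 else 0}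

/-! For `0 < |m| ≤ M` pick the small frequency `ℓ = probeFreq m` (`|ℓ|² ≤ 2`) and `k = ℓ − m`.
Then `𝔠(ℓ, k) = (2⟨ℓ, m⟩ − |ℓ|²)(m₁ℓ₂ − m₂ℓ₁) / |m|²`, and the choice of `ℓ` (along an axis when
`m` is close to a diagonal, along a diagonal otherwise) makes `|𝔠| ≥ 1/2`. Since `|k|² ≤ 6|m|²`,
the weight `|k|^{-(𝔞+2)}` is comparable to `|m|^{-(𝔞+2)}`, and the time integral is at least
`e^{-(2𝔞+24)} κ⁻¹ M⁻⁶ / 72`: restrict to `s ≤ (2κM²)⁻¹`, `r − s ≤ (6M²)⁻¹`, where all three heat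
factors are bounded below. As `m ↦ (ℓ, k)` is injective, the double sum dominates the weighted
bulk `∑_{0<|m|≤M}`; the quantile condition bounds the tail `|m| > M` by `β²` times the bulk, which
costs the factor `1 + β²`. -/

open Real Set Filter Topology

lemma mul_le_intervalIntegral_of_le_on_Icc {f : ℝ → ℝ} {a b δ c : ℝ} (hδ : 0 ≤ δ)
    (hab : a + δ ≤ b) (hfi : IntervalIntegrable f volume a b) (hf : ∀ x ∈ Ioc a b, 0 ≤ f x)
    (hc : ∀ x ∈ Icc a (a + δ), c ≤ f x) :
    δ * c ≤ ∫ x in a..b, f x := by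
  calc δ * c = ∫ _ in a..a + δ, c := by simp
    _ ≤ ∫ x in a..a + δ, f x :=
      intervalIntegral.integral_mono_on (by linarith) intervalIntegrable_const
        (hfi.mono_set (uIcc_subset_uIcc_left
          (by simp [uIcc_of_le (by linarith : a ≤ b), hδ, hab]))) hc
    _ ≤ ∫ x in a..b, f x :=
      intervalIntegral.integral_mono_interval le_rfl (by linarith) hab
        (ae_restrict_of_forall_mem measurableSet_Ioc hf) hfi

lemma continuous_intervalIntegral_of_continuous_uncurry {f : ℝ → ℝ → ℝ}
    (hf : Continuous (Function.uncurry f)) (b : ℝ) :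
    Continuous fun s => ∫ r in s..b, f s r := by
  simp_rw [intervalIntegral.integral_symm b]
  exact ((intervalIntegral.continuous_parametric_primitive_of_continuous hf).comp
    (continuous_id.prodMk continuous_id)).neg

noncomputable def heatTimeIntegral (κ T nl nm nk : ℝ) : ℝ :=
  ∫ s in (0 : ℝ)..T, (∫ r in s..T,
    exp (-κ * nl * (T - r)) * exp (-κ * nm * r) * exp (-nk * (r - s))) ^ 2

lemma heatTimeIntegral_ge {κ T nl nm nk σ ρ : ℝ} (hκ : 0 ≤ κ) (hnl : 0 ≤ nl) (hnm : 0 ≤ nm)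
    (hnk : 0 ≤ nk) (hρ : 0 ≤ ρ) (hρσ : ρ ≤ σ) (hT : σ + ρ ≤ T) (hσ : 2 * κ * nm * σ ≤ 1)
    (hρ' : nk * ρ ≤ 1) :
    σ * (ρ * exp (-(κ * nl * T + 2))) ^ 2 ≤ heatTimeIntegral κ T nl nm nk := by
  set g : ℝ → ℝ → ℝ := fun s r =>
    exp (-κ * nl * (T - r)) * exp (-κ * nm * r) * exp (-nk * (r - s))
  have hg : Continuous (Function.uncurry g) := by fun_prop
  have hinner : ∀ s ∈ Icc 0 (0 + σ), ρ * exp (-(κ * nl * T + 2)) ≤ ∫ r in s..T, g s r := by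
    rintro s ⟨hs0, hsσ⟩
    refine mul_le_intervalIntegral_of_le_on_Icc hρ (by linarith)
      ((hg.comp (continuous_const.prodMk continuous_id)).intervalIntegrable _ _)
      (fun r _ => by positivity) fun r ⟨hsr, hrs⟩ => ?_
    simp only [g, ← exp_add]
    gcongr
    nlinarith [mul_nonneg (mul_nonneg hκ hnl) (hs0.trans hsr),
      mul_le_mul_of_nonneg_left (by linarith : r ≤ 2 * σ) (mul_nonneg hκ hnm),
      mul_le_mul_of_nonneg_left (by linarith : r - s ≤ ρ) hnk]
  exact mul_le_intervalIntegral_of_le_on_Icc (hρ.trans hρσ) (by linarith)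
    (((continuous_intervalIntegral_of_continuous_uncurry hg T).pow 2).intervalIntegrable _ _)
    (fun s _ => sq_nonneg _) fun s hs => pow_le_pow_left₀ (by positivity) (hinner s hs) 2

lemma heatTimeIntegral_ge_of_log {κ M Λ T nl nm nk : ℝ} (hκ : κ ∈ Ioc 0 1) (hM : 0 < M)
    (hΛ : 0 ≤ Λ) (hΛM : 2 / 3 ≤ Λ * log M) (hT : T = Λ * κ⁻¹ * (M ^ 2)⁻¹ * log M)
    (hnl : nl ∈ Icc 0 2) (hnm : nm ∈ Icc 0 (M ^ 2)) (hnk : nk ∈ Icc 0 (6 * M ^ 2)) :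
    exp (-(4 * Λ + 4)) / 72 * κ⁻¹ * (M ^ 6)⁻¹ ≤ heatTimeIntegral κ T nl nm nk := by
  obtain ⟨hκ0, hκ1⟩ := hκ
  have hlog : log M ≤ M ^ 2 := by nlinarith [log_le_sub_one_of_pos hM]
  have hκT : κ * nl * T ≤ 2 * Λ := by
    have : κ * T = Λ * (log M / M ^ 2) := by rw [hT]; field_simp
    have : log M / M ^ 2 ≤ 1 := div_le_one_of_le₀ hlog (by positivity)
    nlinarith [hnl.1, hnl.2, mul_nonneg hΛ (sub_nonneg.2 this), mul_nonneg hκ0.le hnl.1]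
  have key := heatTimeIntegral_ge (σ := (2 * κ * M ^ 2)⁻¹) (ρ := (6 * M ^ 2)⁻¹) (T := T) hκ0.le
    hnl.1 hnm.1 hnk.1 (by positivity) ?_ ?_ ?_ ?_
  · calc exp (-(4 * Λ + 4)) / 72 * κ⁻¹ * (M ^ 6)⁻¹
        = (2 * κ * M ^ 2)⁻¹ * ((6 * M ^ 2)⁻¹ * exp (-(2 * Λ + 2))) ^ 2 := by
          rw [mul_pow, ← exp_nat_mul]; field_simp; ring_nf
      _ ≤ (2 * κ * M ^ 2)⁻¹ * ((6 * M ^ 2)⁻¹ * exp (-(κ * nl * T + 2))) ^ 2 := by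
          gcongr
      _ ≤ _ := key
  · gcongr; linarith
  · rw [hT]
    calc (2 * κ * M ^ 2)⁻¹ + (6 * M ^ 2)⁻¹ ≤ 2 / 3 * κ⁻¹ * (M ^ 2)⁻¹ := by
          field_simp; nlinarith
      _ ≤ _ := by
          have : 0 < κ⁻¹ * (M ^ 2)⁻¹ := by positivity
          nlinarith
  · field_simp; linarith [hnm.2]
  · field_simp; linarith [hnk.2]

noncomputable def stretchMult (ℓ k : ℤ × ℤ) : ℝ := (1 - nsq k / nsq (ℓ - k)) * dotp (perp k) ℓ

def stretchNumerator (ℓ m : ℤ × ℤ) : ℤ :=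
  (2 * (ℓ.1 * m.1 + ℓ.2 * m.2) - (ℓ.1 ^ 2 + ℓ.2 ^ 2)) * (m.1 * ℓ.2 - m.2 * ℓ.1)

lemma nsq_eq_intCast (k : ℤ × ℤ) : nsq k = ((k.1 ^ 2 + k.2 ^ 2 : ℤ) : ℝ) := by
  simp [nsq]

lemma nsq_nonneg (k : ℤ × ℤ) : 0 ≤ nsq k := by unfold nsq; positivity

lemma sq_add_sq_pos_of_ne_zero {k : ℤ × ℤ} (hk : k ≠ 0) : 0 < k.1 ^ 2 + k.2 ^ 2 := by
  have : k.1 ≠ 0 ∨ k.2 ≠ 0 := by contrapose! hk; exact Prod.ext hk.1 hk.2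
  rcases this with h | h <;> positivity

lemma one_le_nsq {k : ℤ × ℤ} (hk : k ≠ 0) : 1 ≤ nsq k := by
  rw [nsq_eq_intCast]
  exact_mod_cast sq_add_sq_pos_of_ne_zero hk

lemma nsq_sub_le (k l : ℤ × ℤ) : nsq (k - l) ≤ 2 * nsq k + 2 * nsq l := by
  simp only [nsq, Prod.fst_sub, Prod.snd_sub, Int.cast_sub]
  nlinarith [sq_nonneg ((k.1 : ℝ) + l.1), sq_nonneg ((k.2 : ℝ) + l.2)]

-- `|m|² − |ℓ − m|² = 2⟨ℓ, m⟩ − |ℓ|²` and `⟨(ℓ − m)⊥, ℓ⟩ = m₁ℓ₂ − m₂ℓ₁`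
lemma stretchMult_sub_eq (ℓ : ℤ × ℤ) {m : ℤ × ℤ} (hm : m ≠ 0) :
    stretchMult ℓ (ℓ - m) = stretchNumerator ℓ m / nsq m := by
  have hm' := (one_le_nsq hm).trans_lt' one_pos |>.ne'
  simp only [stretchMult, sub_sub_cancel]
  unfold nsq at hm' ⊢
  simp only [dotp, perp, stretchNumerator, Prod.fst_sub, Prod.snd_sub]
  push_cast
  field_simp
  ring

def probeFreq (m : ℤ × ℤ) : ℤ × ℤ :=
  if m.1 ^ 2 + m.2 ^ 2 ≤ 4 * |m.1 * m.2| then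
    if 0 ≤ m.1 then (-1, 0) else (1, 0)
  else
    if 0 ≤ m.1 + m.2 then (-1, -1) else (1, 1)

lemma probeFreq_ne_zero (m : ℤ × ℤ) : probeFreq m ≠ 0 := by
  unfold probeFreq; split_ifs <;> simp

lemma nsq_probeFreq_le (m : ℤ × ℤ) : nsq (probeFreq m) ≤ 2 := by
  unfold probeFreq; split_ifs <;> norm_num [nsq]

lemma sq_add_sq_le_four_mul_abs_sq_sub_sq {x y : ℤ} (h : ¬ x ^ 2 + y ^ 2 ≤ 4 * |x * y|) :
    x ^ 2 + y ^ 2 ≤ 4 * |x ^ 2 - y ^ 2| := by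
  -- `(x² + y²)² = (x² − y²)² + (2xy)²`
  nlinarith [sq_abs (x * y), sq_abs (x ^ 2 - y ^ 2), abs_nonneg (x * y), abs_nonneg (x ^ 2 - y ^ 2)]

lemma sq_add_sq_le_two_mul_abs_stretchNumerator (m : ℤ × ℤ) :
    m.1 ^ 2 + m.2 ^ 2 ≤ 2 * |stretchNumerator (probeFreq m) m| := by
  obtain ⟨x, y⟩ := m
  unfold probeFreq
  dsimp only
  split_ifs with hxy hx hx
  · rw [show stretchNumerator (-1, 0) (x, y) = -((2 * x + 1) * y) by simp [stretchNumerator]; ring,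
      abs_neg, abs_mul, abs_of_nonneg (by linarith)]
    rw [abs_mul, abs_of_nonneg hx] at hxy
    nlinarith [abs_nonneg y]
  · rw [show stretchNumerator (1, 0) (x, y) = (1 - 2 * x) * y by simp [stretchNumerator]; ring,
      abs_mul, abs_of_nonneg (by linarith)]
    rw [abs_mul, abs_of_neg (by linarith)] at hxy
    nlinarith [abs_nonneg y]
  · have h := sq_add_sq_le_four_mul_abs_sq_sub_sq hxy
    rw [show x ^ 2 - y ^ 2 = (x + y) * (x - y) by ring, abs_mul, abs_of_nonneg hx] at h
    rw [show stretchNumerator (-1, -1) (x, y) = (2 * (x + y) + 2) * (x - y) by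
        simp [stretchNumerator]; ring,
      abs_mul, abs_of_nonneg (by linarith)]
    nlinarith [abs_nonneg (x - y)]
  · have h := sq_add_sq_le_four_mul_abs_sq_sub_sq hxy
    rw [show x ^ 2 - y ^ 2 = (x + y) * (x - y) by ring, abs_mul, abs_of_neg (by linarith)] at h
    rw [show stretchNumerator (1, 1) (x, y) = (2 - 2 * (x + y)) * (y - x) by
        simp [stretchNumerator]; ring,
      abs_mul, abs_of_nonneg (by linarith), abs_sub_comm]
    nlinarith [abs_nonneg (x - y)]

lemma probeFreq_ne_self {m : ℤ × ℤ} (hm : m ≠ 0) : probeFreq m ≠ m := by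
  intro h
  have hle := sq_add_sq_le_two_mul_abs_stretchNumerator m
  rw [h, show stretchNumerator m m = 0 by simp only [stretchNumerator]; ring] at hle
  rw [abs_zero, mul_zero] at hle
  linarith [sq_add_sq_pos_of_ne_zero hm]

lemma quarter_le_stretchMult_probeFreq_sq {m : ℤ × ℤ} (hm : m ≠ 0) :
    1 / 4 ≤ stretchMult (probeFreq m) (probeFreq m - m) ^ 2 := by
  have hpos : 0 < nsq m := (one_le_nsq hm).trans_lt' one_pos
  have hle : nsq m ≤ 2 * |(stretchNumerator (probeFreq m) m : ℝ)| := by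
    rw [nsq_eq_intCast]; exact_mod_cast sq_add_sq_le_two_mul_abs_stretchNumerator m
  rw [stretchMult_sub_eq _ hm, div_pow, le_div_iff₀ (by positivity)]
  nlinarith [sq_abs (stretchNumerator (probeFreq m) m : ℝ)]

section Mass

variable (a : ℤ × ℤ → ℂ)

noncomputable def tailMass (R : ℝ) : ℝ≥0∞ :=
  ∑' k : ℤ × ℤ, if R < nsq k then ENNReal.ofReal (‖a k‖ ^ 2) else 0

noncomputable def bulkMass (R : ℝ) : ℝ≥0∞ :=
  ∑' k : ℤ × ℤ, if k ≠ 0 ∧ nsq k ≤ R then ENNReal.ofReal (‖a k‖ ^ 2) else 0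

noncomputable def weightedBulkMass (p R : ℝ) : ℝ≥0∞ :=
  ∑' m : ℤ × ℤ, if m ≠ 0 ∧ nsq m ≤ R then ENNReal.ofReal (nsq m ^ (-p) * ‖a m‖ ^ 2) else 0

lemma tailMass_antitone : Antitone (tailMass a) := fun R R' h =>
  ENNReal.tsum_le_tsum fun k => by
    by_cases hk : R' < nsq k
    · simp [hk, h.trans_lt hk]
    · simp [hk]

lemma bulkMass_monotone : Monotone (bulkMass a) := fun R R' h =>
  ENNReal.tsum_le_tsum fun k => by
    by_cases hk : k ≠ 0 ∧ nsq k ≤ R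
    · simp [hk, hk.2.trans h]
    · simp [hk]

variable {a}

lemma ofReal_tsum_ite_norm_sq (hsum : Summable fun k => ‖a k‖ ^ 2) (P : ℤ × ℤ → Prop)
    [DecidablePred P] :
    ENNReal.ofReal (∑' k, if P k then ‖a k‖ ^ 2 else 0) =
      ∑' k, if P k then ENNReal.ofReal (‖a k‖ ^ 2) else 0 := by
  rw [ENNReal.ofReal_tsum_of_nonneg (fun k => by positivity)
    (hsum.indicator {k | P k} |>.congr fun k => by simp [Set.indicator_apply])]
  exact tsum_congr fun k => by split_ifs <;> simp

lemma eventually_nsq_le_sq (k : ℤ × ℤ) : ∀ᶠ N : ℕ in atTop, nsq k ≤ (N : ℝ) ^ 2 :=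
  ((tendsto_pow_atTop two_ne_zero).comp tendsto_natCast_atTop_atTop).eventually_ge_atTop _

-- the tail tends to `0` and the bulk to `∑_{k ≠ 0} |a k|² > 0` (dominated convergence)
lemma exists_tail_le_bulk {β : ℝ} (hβ : β ≠ 0) (hsum : Summable fun k => ‖a k‖ ^ 2)
    (h0 : a 0 = 0) (ha : a ≠ 0) :
    ∃ N : ℕ, 1 ≤ N ∧
      (∑' k : ℤ × ℤ, if (N : ℝ) ^ 2 < nsq k then ‖a k‖ ^ 2 else 0) ≤
        β ^ 2 * ∑' k : ℤ × ℤ, if k ≠ 0 ∧ nsq k ≤ (N : ℝ) ^ 2 then ‖a k‖ ^ 2 else 0 := by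
  have hbound (P : ℕ → ℤ × ℤ → Prop) [∀ N, DecidablePred (P N)] :
      ∀ᶠ N in atTop, ∀ k, ‖if P N k then ‖a k‖ ^ 2 else 0‖ ≤ ‖a k‖ ^ 2 :=
    Eventually.of_forall fun N k => by split_ifs <;> simp
  have htail : Tendsto (fun N : ℕ => ∑' k : ℤ × ℤ, if (N : ℝ) ^ 2 < nsq k then ‖a k‖ ^ 2 else 0)
      atTop (𝓝 (∑' _ : ℤ × ℤ, (0 : ℝ))) :=
    tendsto_tsum_of_dominated_convergence hsum (fun k => tendsto_const_nhds.congr' <|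
      (eventually_nsq_le_sq k).mono fun N hN => by simp [hN.not_gt]) (hbound _)
  have hbulk : Tendsto
      (fun N : ℕ => ∑' k : ℤ × ℤ, if k ≠ 0 ∧ nsq k ≤ (N : ℝ) ^ 2 then ‖a k‖ ^ 2 else 0)
      atTop (𝓝 (∑' k : ℤ × ℤ, if k ≠ 0 then ‖a k‖ ^ 2 else 0)) :=
    tendsto_tsum_of_dominated_convergence hsum (fun k => tendsto_const_nhds.congr' <|
      (eventually_nsq_le_sq k).mono fun N hN => by simp [hN]) (hbound _)
  obtain ⟨m, hm⟩ : ∃ m, a m ≠ 0 := by by_contra! h; exact ha (funext h)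
  have hpos : 0 < β ^ 2 * ∑' k : ℤ × ℤ, if k ≠ 0 then ‖a k‖ ^ 2 else 0 := by
    refine mul_pos (by positivity) (Summable.tsum_pos ?_ (fun k => by positivity) m ?_)
    · exact (hsum.indicator {k | k ≠ 0}).congr fun k => by simp [Set.indicator_apply]
    · rw [if_pos (show m ≠ 0 by rintro rfl; exact hm h0)]
      exact pow_pos (norm_pos_iff.2 hm) 2
  rw [tsum_zero] at htail
  obtain ⟨N, hN1, htailN, hbulkN⟩ := ((eventually_ge_atTop 1).and
    ((htail.eventually (gt_mem_nhds (half_pos hpos))).and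
      ((hbulk.const_mul (β ^ 2)).eventually (lt_mem_nhds (half_lt_self hpos))))).exists
  exact ⟨N, hN1, by linarith⟩

end Mass

lemma tailMass_le_of_specQuantile_le {a : ℤ × ℤ → ℂ} {β : ℝ} (hβ : β ≠ 0)
    (hsum : Summable fun k => ‖a k‖ ^ 2) (h0 : a 0 = 0) (ha : a ≠ 0) {M : ℕ}
    (hM : specQuantile β a ≤ M) :
    tailMass a ((M : ℝ) ^ 2) ≤ ENNReal.ofReal (β ^ 2) * bulkMass a ((M : ℝ) ^ 2) := by
  obtain ⟨-, hQ⟩ := Nat.sInf_mem (exists_tail_le_bulk hβ hsum h0 ha)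
  have hQ' := ENNReal.ofReal_le_ofReal hQ
  rw [ENNReal.ofReal_mul (sq_nonneg β), ofReal_tsum_ite_norm_sq hsum,
    ofReal_tsum_ite_norm_sq hsum] at hQ'
  have hQM : ((specQuantile β a : ℕ) : ℝ) ^ 2 ≤ (M : ℝ) ^ 2 := by gcongr
  calc tailMass a ((M : ℝ) ^ 2) ≤ tailMass a ((specQuantile β a : ℝ) ^ 2) :=
        tailMass_antitone a hQM
    _ ≤ ENNReal.ofReal (β ^ 2) * bulkMass a ((specQuantile β a : ℝ) ^ 2) := hQ'
    _ ≤ ENNReal.ofReal (β ^ 2) * bulkMass a ((M : ℝ) ^ 2) := by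
        gcongr; exact bulkMass_monotone a hQM

lemma weightedMass_le_of_tailMass_le {a : ℤ × ℤ → ℂ} {p R : ℝ} {b : ℝ≥0∞} (hp : 0 ≤ p)
    (hR : 0 < R) (h : tailMass a R ≤ b * bulkMass a R) :
    (∑' m : ℤ × ℤ, if m ≠ 0 then ENNReal.ofReal (nsq m ^ (-p) * ‖a m‖ ^ 2) else 0) ≤
      (1 + b) * weightedBulkMass a p R := by
  set w : ℤ × ℤ → ℝ≥0∞ := fun m => ENNReal.ofReal (nsq m ^ (-p) * ‖a m‖ ^ 2)
  have hsplit : (∑' m : ℤ × ℤ, if m ≠ 0 then w m else 0) =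
      weightedBulkMass a p R + ∑' m : ℤ × ℤ, if R < nsq m then w m else 0 := by
    rw [weightedBulkMass, ← ENNReal.tsum_add]
    refine tsum_congr fun m => ?_
    by_cases hm : m = 0
    · simp [hm, nsq, hR.not_gt]
    · by_cases hmR : nsq m ≤ R <;> simp [w, hm, hmR, not_lt_of_ge]
  have htail : (∑' m : ℤ × ℤ, if R < nsq m then w m else 0) ≤
      ENNReal.ofReal (R ^ (-p)) * tailMass a R := by
    rw [tailMass, ← ENNReal.tsum_mul_left]
    refine ENNReal.tsum_le_tsum fun m => ?_
    split_ifs with hm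
    · rw [← ENNReal.ofReal_mul (by positivity)]
      exact ENNReal.ofReal_le_ofReal <| mul_le_mul_of_nonneg_right
        (Real.rpow_le_rpow_of_nonpos hR hm.le (neg_nonpos.2 hp)) (sq_nonneg _)
    · simp
  have hbulk : ENNReal.ofReal (R ^ (-p)) * bulkMass a R ≤ weightedBulkMass a p R := by
    rw [bulkMass, weightedBulkMass, ← ENNReal.tsum_mul_left]
    refine ENNReal.tsum_le_tsum fun m => ?_
    split_ifs with hm
    · rw [← ENNReal.ofReal_mul (by positivity)]
      exact ENNReal.ofReal_le_ofReal <| mul_le_mul_of_nonneg_right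
        (Real.rpow_le_rpow_of_nonpos ((one_le_nsq hm.1).trans_lt' one_pos) hm.2
          (neg_nonpos.2 hp)) (sq_nonneg _)
    · simp
  calc (∑' m : ℤ × ℤ, if m ≠ 0 then w m else 0)
      ≤ weightedBulkMass a p R + ENNReal.ofReal (R ^ (-p)) * (b * bulkMass a R) := by
        rw [hsplit]; gcongr; exact htail.trans (by gcongr)
    _ = weightedBulkMass a p R + b * (ENNReal.ofReal (R ^ (-p)) * bulkMass a R) := by ring
    _ ≤ weightedBulkMass a p R + b * weightedBulkMass a p R := by gcongr
    _ = (1 + b) * weightedBulkMass a p R := by ring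

noncomputable def modeTerm (p κ T : ℝ) (a : ℤ × ℤ → ℂ) (ℓ k : ℤ × ℤ) : ℝ≥0∞ :=
  if ℓ ≠ 0 ∧ nsq ℓ ≤ 2 ∧ k ≠ 0 ∧ k ≠ ℓ then
    ENNReal.ofReal (stretchMult ℓ k ^ 2 * ‖a (ℓ - k)‖ ^ 2 * nsq k ^ (-p) *
      heatTimeIntegral κ T (nsq ℓ) (nsq (ℓ - k)) (nsq k))
  else 0

lemma ofReal_le_modeTerm_probeFreq {p κ M Λ T : ℝ} (hp : 0 ≤ p) (hκ : κ ∈ Ioc 0 1) (hM : 0 < M)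
    (hΛ : 0 ≤ Λ) (hΛM : 2 / 3 ≤ Λ * log M) (hT : T = Λ * κ⁻¹ * (M ^ 2)⁻¹ * log M)
    (a : ℤ × ℤ → ℂ) {m : ℤ × ℤ} (hm : m ≠ 0) (hmM : nsq m ≤ M ^ 2) :
    ENNReal.ofReal (6 ^ (-p) / 4 * (exp (-(4 * Λ + 4)) / 72) * κ⁻¹ * (M ^ 6)⁻¹ *
        (nsq m ^ (-p) * ‖a m‖ ^ 2)) ≤
      modeTerm p κ T a (probeFreq m) (probeFreq m - m) := by
  set ℓ := probeFreq m
  have hℓ := nsq_probeFreq_le m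
  have hm1 := one_le_nsq hm
  have hk0 : ℓ - m ≠ 0 := sub_ne_zero.2 (probeFreq_ne_self hm)
  rw [modeTerm, if_pos ⟨probeFreq_ne_zero m, hℓ, hk0, fun h => hm (sub_eq_self.1 h)⟩,
    sub_sub_cancel]
  refine ENNReal.ofReal_le_ofReal ?_
  have hk : nsq (ℓ - m) ≤ 6 * nsq m := by linarith [nsq_sub_le ℓ m]
  have hweight : 6 ^ (-p) * nsq m ^ (-p) ≤ nsq (ℓ - m) ^ (-p) := by
    rw [← Real.mul_rpow (by norm_num) (nsq_nonneg m)]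
    exact Real.rpow_le_rpow_of_nonpos (by linarith [one_le_nsq hk0]) hk (neg_nonpos.2 hp)
  have hI := heatTimeIntegral_ge_of_log hκ hM hΛ hΛM hT ⟨nsq_nonneg ℓ, hℓ⟩ ⟨nsq_nonneg m, hmM⟩
    ⟨nsq_nonneg _, by linarith⟩
  calc 6 ^ (-p) / 4 * (exp (-(4 * Λ + 4)) / 72) * κ⁻¹ * (M ^ 6)⁻¹ * (nsq m ^ (-p) * ‖a m‖ ^ 2)
      = 1 / 4 * (6 ^ (-p) * nsq m ^ (-p)) * ‖a m‖ ^ 2 *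
          (exp (-(4 * Λ + 4)) / 72 * κ⁻¹ * (M ^ 6)⁻¹) := by ring
    _ ≤ stretchMult ℓ (ℓ - m) ^ 2 * nsq (ℓ - m) ^ (-p) * ‖a m‖ ^ 2 *
          heatTimeIntegral κ T (nsq ℓ) (nsq m) (nsq (ℓ - m)) := by
        have := Real.rpow_nonneg (nsq_nonneg (ℓ - m)) (-p)
        have := hκ.1
        gcongr
        exact quarter_le_stretchMult_probeFreq_sq hm
    _ = _ := by ring

lemma weightedBulk_le_tsum_modeTerm {p κ M Λ T : ℝ} (hp : 0 ≤ p) (hκ : κ ∈ Ioc 0 1) (hM : 0 < M)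
    (hΛ : 0 ≤ Λ) (hΛM : 2 / 3 ≤ Λ * log M) (hT : T = Λ * κ⁻¹ * (M ^ 2)⁻¹ * log M)
    (a : ℤ × ℤ → ℂ) :
    ENNReal.ofReal (6 ^ (-p) / 4 * (exp (-(4 * Λ + 4)) / 72) * κ⁻¹ * (M ^ 6)⁻¹) *
        weightedBulkMass a p (M ^ 2) ≤
      ∑' ℓ : ℤ × ℤ, ∑' k : ℤ × ℤ, modeTerm p κ T a ℓ k := by
  have hinj : Function.Injective fun m : ℤ × ℤ => (probeFreq m, probeFreq m - m) :=
    fun m m' h => by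
      obtain ⟨h1, h2⟩ := Prod.mk.inj h
      rwa [h1, sub_right_inj] at h2
  rw [weightedBulkMass, ← ENNReal.tsum_mul_left, ← ENNReal.tsum_prod]
  refine le_trans (ENNReal.tsum_le_tsum fun m => ?_)
    (ENNReal.tsum_comp_le_tsum_of_injective hinj fun q => modeTerm p κ T a q.1 q.2)
  split_ifs with hm
  · rw [← ENNReal.ofReal_mul (by have := hκ.1; positivity)]
    exact ofReal_le_modeTerm_probeFreq hp hκ hM hΛ hΛM hT a hm.1 hm.2
  · simp

/-- Deterministic content of Lemma 5.1 (linearised SNS Gaussian lower bound): with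
`λ = 𝔞/2 + 5` and `T = λ κ⁻¹ M⁻² log M`, for `M ≥ max(2, M^{(β)}(a))`,
`∑_{0<|ℓ|≤√2} ∑_{k≠0, k≠ℓ} ((1 − |k|²/|ℓ−k|²)⟨k⊥,ℓ⟩)² |a(ℓ−k)|² |k|^{−(𝔞+2)}
   ∫₀ᵀ (∫ₛᵀ e^{−κ|ℓ|²(T−r)} e^{−κ|ℓ−k|² r} e^{−|k|²(r−s)} dr)² ds
 ≥ c κ⁻¹ M⁻⁶ ∑_{m≠0} |m|^{−(𝔞+2)} |a m|²`. -/
theorem gaussian_lower_bound_linearised_NS (𝔞 : ℝ) (h𝔞 : 10 < 𝔞) (β : ℝ) (hβ : 1 ≤ β) :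
    ∃ c : ℝ, 0 < c ∧
      ∀ κ : ℝ, κ ∈ Set.Ioc (0 : ℝ) 1 →
      ∀ a : ℤ × ℤ → ℂ, Summable (fun k => ‖a k‖ ^ 2) → a 0 = 0 → a ≠ 0 →
      ∀ M : ℕ, 2 ≤ M → specQuantile β a ≤ M →
      ∀ T : ℝ, T = (𝔞 / 2 + 5) * κ⁻¹ * ((M : ℝ) ^ 2)⁻¹ * Real.log M →
      ENNReal.ofReal (c * κ⁻¹ * ((M : ℝ) ^ 6)⁻¹) *
          (∑' m : ℤ × ℤ,
            if m ≠ 0 then ENNReal.ofReal ((nsq m) ^ (-((𝔞 + 2) / 2)) * ‖a m‖ ^ 2) else 0) ≤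
        ∑' ℓ : ℤ × ℤ, ∑' k : ℤ × ℤ,
          (if ℓ ≠ 0 ∧ nsq ℓ ≤ 2 ∧ k ≠ 0 ∧ k ≠ ℓ then
            ENNReal.ofReal
              (((1 - nsq k / nsq (ℓ - k)) * dotp (perp k) ℓ) ^ 2 * ‖a (ℓ - k)‖ ^ 2 *
                (nsq k) ^ (-((𝔞 + 2) / 2)) *
                ∫ s in (0 : ℝ)..T,
                  (∫ r in s..T,
                    Real.exp (-κ * nsq ℓ * (T - r)) * Real.exp (-κ * nsq (ℓ - k) * r) *
                      Real.exp (-nsq k * (r - s))) ^ 2)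
          else 0) := by
  set p := (𝔞 + 2) / 2
  set C := 6 ^ (-p) / 4 * (exp (-(4 * (𝔞 / 2 + 5) + 4)) / 72)
  refine ⟨C / (1 + β ^ 2), by positivity, fun κ hκ a hsum h0 ha M hM hQ T hT => ?_⟩
  have hM2 : (2 : ℝ) ≤ M := by exact_mod_cast hM
  have hΛM : 2 / 3 ≤ (𝔞 / 2 + 5) * log M := by
    nlinarith [log_two_gt_d9, log_le_log two_pos hM2]
  have htail := tailMass_le_of_specQuantile_le (by positivity : β ≠ 0) hsum h0 ha hQ
  have hκ0 := hκ.1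
  calc ENNReal.ofReal (C / (1 + β ^ 2) * κ⁻¹ * ((M : ℝ) ^ 6)⁻¹) *
        (∑' m : ℤ × ℤ, if m ≠ 0 then ENNReal.ofReal (nsq m ^ (-p) * ‖a m‖ ^ 2) else 0)
      ≤ ENNReal.ofReal (C / (1 + β ^ 2) * κ⁻¹ * ((M : ℝ) ^ 6)⁻¹) *
          ((1 + ENNReal.ofReal (β ^ 2)) * weightedBulkMass a p ((M : ℝ) ^ 2)) := by
        gcongr
        exact weightedMass_le_of_tailMass_le (by positivity) (by positivity) htail
    _ = ENNReal.ofReal (C * κ⁻¹ * ((M : ℝ) ^ 6)⁻¹) * weightedBulkMass a p ((M : ℝ) ^ 2) := by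
        rw [← mul_assoc, ← ENNReal.ofReal_one, ← ENNReal.ofReal_add zero_le_one (sq_nonneg β),
          ← ENNReal.ofReal_mul (by positivity)]
        congr 2
        field_simp
    _ ≤ _ := weightedBulk_le_tsum_modeTerm (by positivity) hκ (by positivity) (by positivity)
          hΛM hT a
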